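/- arXiv:0811.3637 — 2 statements merged into one kernel-verified Lean document; each statement's English description precedes it below -/
import Mathlib

section
/- Let R₁, R₂: ℝ³ → ℂ satisfy |R_j(x)| ≤ C e^{−γ‖x − α_j‖} with γ > 0, where ‖α₂ − α₁‖ = A ≥ 1. Then for every ε ∈ L²(ℝ³), |∫∫ Re(ε(y)\bar R₁(y)) Re(ε(z)\bar R₂(z))/‖y−z‖ dy dz| ≤ C' (1/A + A^{1/2} e^{−A/4}) ‖ε‖²_{L²}. -/
open MeasureTheory Real
noncomputable section

abbrev E3 := EuclideanSpace ℝ (Fin 3)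

open Metric Module
open scoped ENNReal Nat

/-!
Bound `|Re(ε R̄₁)(y) Re(ε R̄₂)(z)|` by `C² |ε y| |ε z| e^{-γ‖y - α₁‖} e^{-γ‖z - α₂‖}` and split
`‖y - z‖⁻¹ ≤ 2/A + 𝟙{‖y - z‖ < A/2} ‖y - z‖⁻¹`. Where `‖y - z‖ < A/2` the triangle inequality
gives `‖y - α₁‖ + ‖z - α₂‖ ≥ A/2`, so the exponentials are at most `e^{-γA/2}`. The resulting
kernel `coulombMajorant` has all row and column integrals at most
`(2/A) ∫ e^{-γ‖x‖} + e^{-γA/2} ∫_{‖w‖ < A/2} ‖w‖⁻¹ = O(1/A)`, the last integral being `O(A³)`,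
and Schur's test (`2ab ≤ a² + b²`) bounds the double integral by `O(1/A) ‖ε‖²_{L²}`.
All estimates are made for lower Lebesgue integrals, so the integrand need not be integrable.
-/

theorem ENNReal.two_mul_le_add_sq (a b : ℝ≥0∞) : 2 * a * b ≤ a ^ 2 + b ^ 2 := by
  rcases eq_or_ne a ⊤ with rfl | ha
  · simp
  rcases eq_or_ne b ⊤ with rfl | hb
  · simp
  lift a to NNReal using ha
  lift b to NNReal using hb
  exact_mod_cast _root_.two_mul_le_add_sq a b

section Schur

variable {α : Type*} [MeasurableSpace α] {μ : Measure α} [SFinite μ]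

theorem lintegral_lintegral_mul_mul_le_of_lintegral_le {u : α → ℝ≥0∞} {K : α → α → ℝ≥0∞}
    (hu : AEMeasurable u μ) (hK : Measurable (Function.uncurry K)) {M : ℝ≥0∞}
    (hrow : ∀ y, ∫⁻ z, K y z ∂μ ≤ M) (hcol : ∀ z, ∫⁻ y, K y z ∂μ ≤ M) :
    ∫⁻ y, ∫⁻ z, u y * u z * K y z ∂μ ∂μ ≤ M * ∫⁻ y, u y ^ 2 ∂μ := by
  have hu2 : AEMeasurable (fun y => u y ^ 2) μ := hu.pow_const 2
  have hrow' : ∫⁻ y, u y ^ 2 * ∫⁻ z, K y z ∂μ ∂μ ≤ M * ∫⁻ y, u y ^ 2 ∂μ :=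
    calc _ ≤ ∫⁻ y, u y ^ 2 * M ∂μ := by gcongr with y; exact hrow y
      _ = _ := by rw [lintegral_mul_const'' _ hu2, mul_comm]
  have hcol' : ∫⁻ y, ∫⁻ z, u z ^ 2 * K y z ∂μ ∂μ ≤ M * ∫⁻ y, u y ^ 2 ∂μ := by
    rw [lintegral_lintegral_swap (hu2.comp_snd.mul hK.aemeasurable)]
    calc _ = ∫⁻ z, u z ^ 2 * ∫⁻ y, K y z ∂μ ∂μ := by
          congr with z; exact lintegral_const_mul _ hK.of_uncurry_right
      _ ≤ ∫⁻ z, u z ^ 2 * M ∂μ := by gcongr with z; exact hcol z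
      _ = _ := by rw [lintegral_mul_const'' _ hu2, mul_comm]
  have hdouble : 2 * ∫⁻ y, ∫⁻ z, u y * u z * K y z ∂μ ∂μ ≤ 2 * (M * ∫⁻ y, u y ^ 2 ∂μ) :=
    calc 2 * ∫⁻ y, ∫⁻ z, u y * u z * K y z ∂μ ∂μ
        = ∫⁻ y, ∫⁻ z, 2 * u y * u z * K y z ∂μ ∂μ := by
          rw [← lintegral_const_mul' _ _ ENNReal.ofNat_ne_top]
          congr with y
          rw [← lintegral_const_mul' _ _ ENNReal.ofNat_ne_top]
          simp only [mul_assoc]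
      _ ≤ ∫⁻ y, ∫⁻ z, (u y ^ 2 * K y z + u z ^ 2 * K y z) ∂μ ∂μ := by
          gcongr with y z
          rw [← add_mul]
          gcongr
          exact ENNReal.two_mul_le_add_sq _ _
      _ = ∫⁻ y, u y ^ 2 * ∫⁻ z, K y z ∂μ ∂μ + ∫⁻ y, ∫⁻ z, u z ^ 2 * K y z ∂μ ∂μ := by
          have hmeas : AEMeasurable (fun y => u y ^ 2 * ∫⁻ z, K y z ∂μ) μ :=
            hu2.mul hK.lintegral_prod_right'.aemeasurable
          rw [← lintegral_add_left' hmeas]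
          congr with y
          rw [lintegral_add_left (hK.of_uncurry_left.const_mul _),
            lintegral_const_mul _ hK.of_uncurry_left]
      _ ≤ 2 * (M * ∫⁻ y, u y ^ 2 ∂μ) := by rw [two_mul]; exact add_le_add hrow' hcol'
  exact (ENNReal.mul_le_mul_iff_right two_ne_zero ENNReal.ofNat_ne_top).1 hdouble

end Schur

theorem enorm_integral_integral_le {α β G : Type*} [MeasurableSpace α] [MeasurableSpace β]
    [NormedAddCommGroup G] [NormedSpace ℝ G] {μ : Measure α} {ν : Measure β} (F : α → β → G) :
    ‖∫ y, ∫ z, F y z ∂ν ∂μ‖ₑ ≤ ∫⁻ y, ∫⁻ z, ‖F y z‖ₑ ∂ν ∂μ :=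
  (enorm_integral_le_lintegral_enorm _).trans
    (lintegral_mono fun _ => enorm_integral_le_lintegral_enorm _)

theorem MeasureTheory.MemLp.lintegral_enorm_sq_eq {α F : Type*} [MeasurableSpace α]
    [NormedAddCommGroup F] {μ : Measure α} {f : α → F} (hf : MemLp f 2 μ) :
    ∫⁻ x, ‖f x‖ₑ ^ 2 ∂μ = ENNReal.ofReal (∫ x, ‖f x‖ ^ 2 ∂μ) := by
  rw [ofReal_integral_eq_lintegral_ofReal (hf.integrable_norm_pow two_ne_zero)
    (ae_of_all _ fun x => by positivity)]
  simp_rw [ENNReal.ofReal_pow (norm_nonneg _), ofReal_norm]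

theorem pow_mul_exp_neg_mul_le (n : ℕ) {b x : ℝ} (hb : 0 < b) (hx : 0 ≤ x) :
    x ^ n * exp (-(b * x)) ≤ n ! / b ^ n := by
  have h := pow_div_factorial_le_exp (b * x) (by positivity) n
  rw [div_le_iff₀ (by positivity), mul_pow] at h
  rw [le_div_iff₀ (by positivity), exp_neg]
  calc x ^ n * (exp (b * x))⁻¹ * b ^ n = b ^ n * x ^ n * (exp (b * x))⁻¹ := by ring
    _ ≤ exp (b * x) * n ! * (exp (b * x))⁻¹ := by gcongr
    _ = n ! := by field_simp

theorem Complex.enorm_re_mul_conj_le {a b : ℂ} {c : ℝ} (h : ‖b‖ ≤ c) :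
    ‖(a * (starRingEnd ℂ) b).re‖ₑ ≤ ‖a‖ₑ * ENNReal.ofReal c := by
  rw [Real.enorm_eq_ofReal_abs, ← ofReal_norm, ← ENNReal.ofReal_mul (norm_nonneg a)]
  gcongr
  calc |(a * (starRingEnd ℂ) b).re| ≤ ‖a * (starRingEnd ℂ) b‖ := Complex.abs_re_le_norm _
    _ ≤ ‖a‖ * c := by rw [norm_mul, Complex.norm_conj]; gcongr

section Coulomb

variable {E : Type*} [NormedAddCommGroup E] {C γ : ℝ} {R₁ R₂ ε : E → ℂ} {α₁ α₂ : E}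

theorem exp_mul_exp_le_of_norm_sub_lt (hγ : 0 ≤ γ) {y z : E}
    (h : ‖y - z‖ < ‖α₂ - α₁‖ / 2) :
    exp (-γ * ‖y - α₁‖) * exp (-γ * ‖z - α₂‖) ≤ exp (-γ * (‖α₂ - α₁‖ / 2)) := by
  have h₁ := norm_sub_le_norm_sub_add_norm_sub α₂ z α₁
  have h₂ := norm_sub_le_norm_sub_add_norm_sub z y α₁
  rw [norm_sub_rev α₂ z, norm_sub_rev z y] at *
  rw [← exp_add, exp_le_exp]
  nlinarith

def coulombMajorant (γ : ℝ) (α₁ α₂ y z : E) : ℝ≥0∞ :=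
  ENNReal.ofReal (2 / ‖α₂ - α₁‖) *
      (ENNReal.ofReal (exp (-γ * ‖y - α₁‖)) * ENNReal.ofReal (exp (-γ * ‖z - α₂‖))) +
    ENNReal.ofReal (exp (-γ * (‖α₂ - α₁‖ / 2))) *
      (ball (0 : E) (‖α₂ - α₁‖ / 2)).indicator (fun w => ENNReal.ofReal ‖w‖⁻¹) (y - z)

theorem coulombMajorant_comm (y z : E) :
    coulombMajorant γ α₁ α₂ y z = coulombMajorant γ α₂ α₁ z y := by
  have hnear (r : ℝ) : (ball (0 : E) r).indicator (fun w => ENNReal.ofReal ‖w‖⁻¹) (y - z) =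
      (ball (0 : E) r).indicator (fun w => ENNReal.ofReal ‖w‖⁻¹) (z - y) := by
    simp only [Set.indicator, mem_ball_zero_iff, norm_sub_rev y z]
  rw [coulombMajorant, coulombMajorant, norm_sub_rev α₁ α₂, hnear, mul_comm (ENNReal.ofReal _)
    (ENNReal.ofReal (exp (-γ * ‖z - α₂‖)))]

theorem ofReal_exp_mul_exp_mul_inv_norm_le_coulombMajorant (hγ : 0 ≤ γ) (hα : α₁ ≠ α₂) (y z : E) :
    ENNReal.ofReal (exp (-γ * ‖y - α₁‖)) * ENNReal.ofReal (exp (-γ * ‖z - α₂‖)) *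
      ENNReal.ofReal ‖y - z‖⁻¹ ≤ coulombMajorant γ α₁ α₂ y z := by
  have hA : 0 < ‖α₂ - α₁‖ := norm_pos_iff.2 (sub_ne_zero.2 hα.symm)
  rw [coulombMajorant]
  by_cases hnear : ‖y - z‖ < ‖α₂ - α₁‖ / 2
  · rw [Set.indicator_of_mem (mem_ball_zero_iff.2 hnear), ← ENNReal.ofReal_mul (exp_pos _).le]
    refine le_add_left ?_
    gcongr
    exact exp_mul_exp_le_of_norm_sub_lt hγ hnear
  · have hfar : ‖y - z‖⁻¹ ≤ 2 / ‖α₂ - α₁‖ := by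
      rw [← inv_div]
      exact inv_anti₀ (by positivity) (not_lt.1 hnear)
    rw [mul_comm _ (ENNReal.ofReal _)]
    refine le_add_right ?_
    gcongr

theorem enorm_coulomb_le (hC : 0 ≤ C) (hγ : 0 ≤ γ)
    (hR₁ : ∀ x, ‖R₁ x‖ ≤ C * exp (-γ * ‖x - α₁‖)) (hR₂ : ∀ x, ‖R₂ x‖ ≤ C * exp (-γ * ‖x - α₂‖))
    (hα : α₁ ≠ α₂) (y z : E) :
    ‖(ε y * (starRingEnd ℂ) (R₁ y)).re * (ε z * (starRingEnd ℂ) (R₂ z)).re / ‖y - z‖‖ₑ ≤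
      ENNReal.ofReal (C ^ 2) * (‖ε y‖ₑ * ‖ε z‖ₑ * coulombMajorant γ α₁ α₂ y z) := by
  have hy := Complex.enorm_re_mul_conj_le (a := ε y) (hR₁ y)
  have hz := Complex.enorm_re_mul_conj_le (a := ε z) (hR₂ z)
  rw [ENNReal.ofReal_mul hC] at hy hz
  calc _ = ‖(ε y * (starRingEnd ℂ) (R₁ y)).re‖ₑ * ‖(ε z * (starRingEnd ℂ) (R₂ z)).re‖ₑ *
          ENNReal.ofReal ‖y - z‖⁻¹ := by
        rw [div_eq_mul_inv, enorm_mul, enorm_mul,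
          Real.enorm_eq_ofReal (inv_nonneg.2 (norm_nonneg _))]
    _ ≤ ‖ε y‖ₑ * (ENNReal.ofReal C * ENNReal.ofReal (exp (-γ * ‖y - α₁‖))) *
          (‖ε z‖ₑ * (ENNReal.ofReal C * ENNReal.ofReal (exp (-γ * ‖z - α₂‖)))) *
          ENNReal.ofReal ‖y - z‖⁻¹ := by gcongr
    _ = ENNReal.ofReal (C ^ 2) * (‖ε y‖ₑ * ‖ε z‖ₑ * (ENNReal.ofReal (exp (-γ * ‖y - α₁‖)) *
          ENNReal.ofReal (exp (-γ * ‖z - α₂‖)) * ENNReal.ofReal ‖y - z‖⁻¹)) := by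
        rw [ENNReal.ofReal_pow hC]; ring
    _ ≤ _ := by
        gcongr
        exact ofReal_exp_mul_exp_mul_inv_norm_le_coulombMajorant hγ hα y z

variable [MeasurableSpace E]

def coulombSchurBound (μ : Measure E) (γ A : ℝ) : ℝ≥0∞ :=
  ENNReal.ofReal (2 / A) * ∫⁻ x, ENNReal.ofReal (exp (-γ * ‖x‖)) ∂μ +
    ENNReal.ofReal (exp (-γ * (A / 2))) * ∫⁻ w in ball (0 : E) (A / 2), ENNReal.ofReal ‖w‖⁻¹ ∂μ

theorem lintegral_ball_inv_norm_le [OpensMeasurableSpace E] (μ : Measure E) (r : ℝ) :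
    ∫⁻ w in ball (0 : E) r, ENNReal.ofReal ‖w‖⁻¹ ∂μ ≤
      ∫⁻ w in ball (0 : E) 1, ENNReal.ofReal ‖w‖⁻¹ ∂μ + μ (ball 0 r) := by
  have hpt (w : E) : ENNReal.ofReal ‖w‖⁻¹ ≤
      (ball (0 : E) 1).indicator (fun w => ENNReal.ofReal ‖w‖⁻¹) w + 1 := by
    by_cases hw : ‖w‖ < 1
    · rw [Set.indicator_of_mem (mem_ball_zero_iff.2 hw)]
      exact le_self_add
    · rw [Set.indicator_of_notMem (mt mem_ball_zero_iff.1 hw), zero_add]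
      exact ENNReal.ofReal_le_one.2 (inv_le_one_of_one_le₀ (not_lt.1 hw))
  calc _ ≤ ∫⁻ w in ball (0 : E) r,
          ((ball (0 : E) 1).indicator (fun w => ENNReal.ofReal ‖w‖⁻¹) w + 1) ∂μ :=
        lintegral_mono hpt
    _ = ∫⁻ w in ball (0 : E) r, (ball (0 : E) 1).indicator (fun w => ENNReal.ofReal ‖w‖⁻¹) w ∂μ +
          μ (ball 0 r) := by
        rw [lintegral_add_right _ measurable_const, setLIntegral_one]
    _ ≤ _ := add_le_add_left ((setLIntegral_le_lintegral _ _).trans_eq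
          (lintegral_indicator measurableSet_ball _)) _

variable [NormedSpace ℝ E] [FiniteDimensional ℝ E] [BorelSpace E] {μ : Measure E}
  [μ.IsAddHaarMeasure]

theorem measurable_coulombMajorant :
    Measurable (Function.uncurry (coulombMajorant (E := E) γ α₁ α₂)) := by
  have hnear : Measurable fun p : E × E =>
      (ball (0 : E) (‖α₂ - α₁‖ / 2)).indicator (fun w => ENNReal.ofReal ‖w‖⁻¹) (p.1 - p.2) :=
    (measurable_norm.inv.ennreal_ofReal.indicator measurableSet_ball).comp
      (measurable_fst.sub measurable_snd)
  unfold coulombMajorant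
  fun_prop

theorem lintegral_coulombMajorant_le (hγ : 0 ≤ γ) (y : E) :
    ∫⁻ z, coulombMajorant γ α₁ α₂ y z ∂μ ≤ coulombSchurBound μ γ ‖α₂ - α₁‖ := by
  have hexp : ∫⁻ z, ENNReal.ofReal (exp (-γ * ‖z - α₂‖)) ∂μ =
      ∫⁻ x, ENNReal.ofReal (exp (-γ * ‖x‖)) ∂μ :=
    lintegral_sub_right_eq_self (fun x => ENNReal.ofReal (exp (-γ * ‖x‖))) α₂
  have hnear : ∫⁻ z, (ball (0 : E) (‖α₂ - α₁‖ / 2)).indicator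
      (fun w => ENNReal.ofReal ‖w‖⁻¹) (y - z) ∂μ =
      ∫⁻ w in ball (0 : E) (‖α₂ - α₁‖ / 2), ENNReal.ofReal ‖w‖⁻¹ ∂μ := by
    rw [lintegral_sub_left_eq_self, lintegral_indicator measurableSet_ball]
  have hy : ENNReal.ofReal (exp (-γ * ‖y - α₁‖)) ≤ 1 :=
    ENNReal.ofReal_le_one.2 (exp_le_one_iff.2 (by nlinarith [norm_nonneg (y - α₁)]))
  unfold coulombMajorant coulombSchurBound
  rw [lintegral_add_left (by fun_prop), lintegral_const_mul' _ _ ENNReal.ofReal_ne_top,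
    lintegral_const_mul' _ _ ENNReal.ofReal_ne_top, lintegral_const_mul' _ _ ENNReal.ofReal_ne_top,
    hexp, hnear]
  gcongr
  exact mul_le_of_le_one_left' hy

theorem enorm_integral_coulomb_le (hC : 0 ≤ C) (hγ : 0 ≤ γ)
    (hR₁ : ∀ x, ‖R₁ x‖ ≤ C * exp (-γ * ‖x - α₁‖)) (hR₂ : ∀ x, ‖R₂ x‖ ≤ C * exp (-γ * ‖x - α₂‖))
    (hα : α₁ ≠ α₂) (hε : AEStronglyMeasurable ε μ) :
    ‖∫ y, ∫ z, (ε y * (starRingEnd ℂ) (R₁ y)).re * (ε z * (starRingEnd ℂ) (R₂ z)).re /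
        ‖y - z‖ ∂μ ∂μ‖ₑ ≤
      ENNReal.ofReal (C ^ 2) * coulombSchurBound μ γ ‖α₂ - α₁‖ * ∫⁻ x, ‖ε x‖ₑ ^ 2 ∂μ := by
  have hcol (z : E) : ∫⁻ y, coulombMajorant γ α₁ α₂ y z ∂μ ≤ coulombSchurBound μ γ ‖α₂ - α₁‖ := by
    simp_rw [coulombMajorant_comm _ z, norm_sub_rev α₂ α₁]
    exact lintegral_coulombMajorant_le (α₁ := α₂) (α₂ := α₁) hγ z
  calc _ ≤ ∫⁻ y, ∫⁻ z, ENNReal.ofReal (C ^ 2) *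
          (‖ε y‖ₑ * ‖ε z‖ₑ * coulombMajorant γ α₁ α₂ y z) ∂μ ∂μ := by
        refine (enorm_integral_integral_le _).trans ?_
        gcongr with y z
        exact enorm_coulomb_le hC hγ hR₁ hR₂ hα y z
    _ = ENNReal.ofReal (C ^ 2) *
          ∫⁻ y, ∫⁻ z, ‖ε y‖ₑ * ‖ε z‖ₑ * coulombMajorant γ α₁ α₂ y z ∂μ ∂μ := by
        simp_rw [lintegral_const_mul' _ _ ENNReal.ofReal_ne_top]
    _ ≤ _ := by
        rw [mul_assoc]
        gcongr
        exact lintegral_lintegral_mul_mul_le_of_lintegral_le hε.enorm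
          measurable_coulombMajorant (lintegral_coulombMajorant_le hγ) hcol

theorem integrable_exp_neg_mul_norm [Nontrivial E] {b : ℝ} (hb : 0 < b) :
    Integrable (fun x : E => exp (-b * ‖x‖)) μ := by
  rw [integrable_fun_norm_addHaar μ (f := fun r => exp (-b * r))]
  refine (integrableOn_rpow_mul_exp_neg_mul_rpow (s := (finrank ℝ E - 1 : ℕ)) (p := 1)
    (by linarith [(Nat.cast_nonneg _ : (0 : ℝ) ≤ (finrank ℝ E - 1 : ℕ))]) one_pos hb).congr_fun
    (fun r _ => ?_) measurableSet_Ioi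
  simp [Real.rpow_natCast]

theorem lintegral_ball_inv_norm_lt_top (hd : 2 ≤ finrank ℝ E) (r : ℝ) :
    ∫⁻ w in ball (0 : E) r, ENNReal.ofReal ‖w‖⁻¹ ∂μ < ⊤ :=
  (integrableOn_ball_of_norm_le_rpow (μ := μ) (f := fun w : E => ‖w‖⁻¹) (C := 1) (α := 1) (by omega)
    (by exact_mod_cast hd) (ae_of_all _ fun w => by simp [Real.rpow_neg_one])
    (by fun_prop)).lintegral_lt_top

theorem ofReal_exp_mul_lintegral_ball_inv_norm_le [Nontrivial E] {A : ℝ} (hγ : 0 < γ)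
    (hA : 1 ≤ A) :
    ENNReal.ofReal (exp (-γ * (A / 2))) * ∫⁻ w in ball (0 : E) (A / 2), ENNReal.ofReal ‖w‖⁻¹ ∂μ ≤
      ENNReal.ofReal (1 / A) * (ENNReal.ofReal ((finrank ℝ E + 1)! / (γ / 2) ^ (finrank ℝ E + 1)) *
        (∫⁻ w in ball (0 : E) 1, ENNReal.ofReal ‖w‖⁻¹ ∂μ + μ (ball 0 1))) := by
  set d := finrank ℝ E
  set I := ∫⁻ w in ball (0 : E) 1, ENNReal.ofReal ‖w‖⁻¹ ∂μ + μ (ball 0 1)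
  have hball : ∫⁻ w in ball (0 : E) (A / 2), ENNReal.ofReal ‖w‖⁻¹ ∂μ ≤ ENNReal.ofReal (A ^ d) * I :=
    calc _ ≤ ∫⁻ w in ball (0 : E) 1, ENNReal.ofReal ‖w‖⁻¹ ∂μ + μ (ball 0 (A / 2)) :=
          lintegral_ball_inv_norm_le μ _
      _ = ∫⁻ w in ball (0 : E) 1, ENNReal.ofReal ‖w‖⁻¹ ∂μ +
            ENNReal.ofReal ((A / 2) ^ d) * μ (ball 0 1) := by
          rw [Measure.addHaar_ball _ _ (by positivity)]
      _ ≤ _ := by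
          rw [mul_add]
          gcongr
          · exact le_mul_of_one_le_left' (ENNReal.one_le_ofReal.2 (one_le_pow₀ hA))
          · linarith
  have hexp : exp (-γ * (A / 2)) * A ^ d ≤ 1 / A * ((d + 1)! / (γ / 2) ^ (d + 1)) :=
    calc exp (-γ * (A / 2)) * A ^ d = 1 / A * (A ^ (d + 1) * exp (-(γ / 2 * A))) := by
          field_simp
          ring_nf
      _ ≤ _ := by gcongr; exact pow_mul_exp_neg_mul_le _ (half_pos hγ) (by linarith)
  calc _ ≤ ENNReal.ofReal (exp (-γ * (A / 2))) * (ENNReal.ofReal (A ^ d) * I) := by gcongr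
    _ = ENNReal.ofReal (exp (-γ * (A / 2)) * A ^ d) * I := by
        rw [ENNReal.ofReal_mul (exp_pos _).le, mul_assoc]
    _ ≤ ENNReal.ofReal (1 / A * ((d + 1)! / (γ / 2) ^ (d + 1))) * I := by gcongr
    _ = _ := by rw [ENNReal.ofReal_mul (by positivity), mul_assoc]

theorem exists_coulombSchurBound_le (hd : 2 ≤ finrank ℝ E) (hγ : 0 < γ) :
    ∃ D : ℝ≥0∞, D ≠ ⊤ ∧ ∀ A : ℝ, 1 ≤ A → coulombSchurBound μ γ A ≤ ENNReal.ofReal (1 / A) * D := by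
  have : Nontrivial E := Module.nontrivial_of_finrank_pos (R := ℝ) (by omega)
  have hexp := (integrable_exp_neg_mul_norm (μ := μ) hγ).lintegral_lt_top
  have hnear := lintegral_ball_inv_norm_lt_top (μ := μ) hd 1
  have hball : μ (ball 0 1) < ⊤ := measure_ball_lt_top
  refine ⟨2 * ∫⁻ x, ENNReal.ofReal (exp (-γ * ‖x‖)) ∂μ +
      ENNReal.ofReal ((finrank ℝ E + 1)! / (γ / 2) ^ (finrank ℝ E + 1)) *
        (∫⁻ w in ball (0 : E) 1, ENNReal.ofReal ‖w‖⁻¹ ∂μ + μ (ball 0 1)),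
    by finiteness, fun A hA => ?_⟩
  rw [coulombSchurBound, mul_add, ← mul_assoc, ← ENNReal.ofReal_ofNat 2,
    ← ENNReal.ofReal_mul (by positivity), one_div_mul_eq_div]
  exact add_le_add le_rfl (ofReal_exp_mul_lintegral_ball_inv_norm_le hγ hA)

end Coulomb

/-- Interaction estimate for two exponentially localized profiles at distance `A`: the
Coulomb-type bilinear form is bounded by `C'(1/A + √A e^{−A/4})‖ε‖²_{L²}`. -/
theorem stmt12 (C γ : ℝ) (hC : 0 < C) (hγ : 0 < γ) :
    ∃ C' > (0:ℝ), ∀ (R₁ R₂ : E3 → ℂ) (α₁ α₂ : E3),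
      (∀ x, ‖R₁ x‖ ≤ C * Real.exp (-γ * ‖x - α₁‖)) →
      (∀ x, ‖R₂ x‖ ≤ C * Real.exp (-γ * ‖x - α₂‖)) →
      1 ≤ ‖α₂ - α₁‖ →
      ∀ ε : E3 → ℂ, MemLp ε 2 (volume : Measure E3) →
        |∫ y : E3, ∫ z : E3,
            (ε y * (starRingEnd ℂ) (R₁ y)).re * (ε z * (starRingEnd ℂ) (R₂ z)).re / ‖y - z‖|
          ≤ C' * (1 / ‖α₂ - α₁‖
              + ‖α₂ - α₁‖ ^ ((1:ℝ)/2) * Real.exp (-‖α₂ - α₁‖ / 4))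
            * ∫ x : E3, ‖ε x‖ ^ 2 := by
  obtain ⟨D, hD, hbound⟩ := exists_coulombSchurBound_le (μ := (volume : Measure E3)) (by simp) hγ
  set D' := (ENNReal.ofReal (C ^ 2) * D).toReal
  refine ⟨D' + 1, by positivity, fun R₁ R₂ α₁ α₂ hR₁ hR₂ hA ε hε => ?_⟩
  set A := ‖α₂ - α₁‖
  have hα : α₁ ≠ α₂ := by rintro rfl; norm_num [A] at hA
  have key : ‖∫ y, ∫ z, (ε y * (starRingEnd ℂ) (R₁ y)).re * (ε z * (starRingEnd ℂ) (R₂ z)).re /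
      ‖y - z‖‖ₑ ≤ ENNReal.ofReal (D' * (1 / A) * ∫ x, ‖ε x‖ ^ 2) :=
    calc _ ≤ ENNReal.ofReal (C ^ 2) * coulombSchurBound volume γ A * ∫⁻ x, ‖ε x‖ₑ ^ 2 :=
        enorm_integral_coulomb_le hC.le hγ.le hR₁ hR₂ hα hε.1
      _ ≤ ENNReal.ofReal (C ^ 2) * (ENNReal.ofReal (1 / A) * D) *
          ENNReal.ofReal (∫ x, ‖ε x‖ ^ 2) := by
        rw [hε.lintegral_enorm_sq_eq]
        gcongr
        exact hbound A hA
      _ = _ := by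
        rw [ENNReal.ofReal_mul (by positivity), ENNReal.ofReal_mul (by positivity),
          ENNReal.ofReal_toReal (by finiteness)]
        ring
  calc _ ≤ D' * (1 / A) * ∫ x, ‖ε x‖ ^ 2 := by
        rw [← Real.norm_eq_abs, ← toReal_enorm]
        exact ENNReal.toReal_le_of_le_ofReal (by positivity) key
    _ ≤ _ := by
        gcongr
        · linarith
        · exact le_add_of_nonneg_right (by positivity)
end
end

section
/- Let (λ₁, λ₂, α, β): [T₀,∞) → ℝ×ℝ×ℝ³×ℝ³ be C¹ and satisfy |\dot λ₁ − \dot λ₂| ≤ C[‖β‖/‖α‖² · |λ₁ − λ₂| + 1/‖α‖³], with ‖α(t)‖ ≥ c t^{2/3}, ‖β(t)‖ ≤ C t^{−1/3}, and λ₁(t) − λ₂(t) → 0 as t → ∞. Then |λ₁(t) − λ₂(t)| ≤ C'/t for all t ≥ T₀. -/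
open Filter Set Topology
noncomputable section

/-!
If `|f'| ≤ -G'` on `[a, ∞)` and both `f` and `G` tend to `0`, then `G + f` and `G - f` are
antitone with limit `0`, hence `|f| ≤ G`. For `f = λ₁ - λ₂` the hypotheses give
`|f'(u)| ≤ A u^(-5/3) |f(u)| + B u^(-2)`, so a bound `|f| ≤ K u^(-p)` yields, with
`G(u) = A K / (p + 2/3) u^(-(p + 2/3)) + B u^(-1)`, the bound `|f| ≲ u^(-min(p + 2/3, 1))`.
Starting from `p = 0` (`f` is continuous and tends to `0`, hence bounded), one step gives
`u^(-2/3)` and a second one `u^(-1)`.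
-/

theorem nonneg_of_hasDerivAt_nonpos_of_tendsto_zero {h h' : ℝ → ℝ} {a : ℝ}
    (hh : ∀ u ≥ a, HasDerivAt h (h' u) u) (hh' : ∀ u ≥ a, h' u ≤ 0)
    (hlim : Tendsto h atTop (𝓝 0)) {t : ℝ} (ht : a ≤ t) : 0 ≤ h t := by
  have hanti : AntitoneOn h (Ici a) := by
    refine antitoneOn_of_hasDerivWithinAt_nonpos (convex_Ici a)
      (fun u hu => (hh u hu).continuousAt.continuousWithinAt) (fun u hu => ?_)
      (fun u hu => hh' u (interior_subset hu))
    exact (hh u (interior_subset hu)).hasDerivWithinAt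
  refine le_of_tendsto hlim (eventually_atTop.mpr ⟨t, fun s hs => ?_⟩)
  exact hanti ht (ht.trans hs) hs

theorem abs_le_of_abs_deriv_le_neg_deriv {f f' G G' : ℝ → ℝ} {a : ℝ}
    (hf : ∀ u ≥ a, HasDerivAt f (f' u) u) (hG : ∀ u ≥ a, HasDerivAt G (G' u) u)
    (hle : ∀ u ≥ a, |f' u| ≤ -G' u) (hf0 : Tendsto f atTop (𝓝 0))
    (hG0 : Tendsto G atTop (𝓝 0)) {t : ℝ} (ht : a ≤ t) : |f t| ≤ G t := by
  have hadd : 0 ≤ G t + f t :=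
    nonneg_of_hasDerivAt_nonpos_of_tendsto_zero (h := fun x => G x + f x)
      (fun u hu => (hG u hu).add (hf u hu)) (fun u hu => by linarith [le_abs_self (f' u), hle u hu])
      (by simpa using hG0.add hf0) ht
  have hsub : 0 ≤ G t - f t :=
    nonneg_of_hasDerivAt_nonpos_of_tendsto_zero (h := fun x => G x - f x)
      (fun u hu => (hG u hu).sub (hf u hu)) (fun u hu => by linarith [neg_abs_le (f' u), hle u hu])
      (by simpa using hG0.sub hf0) ht
  exact abs_le.mpr ⟨by linarith, by linarith⟩

theorem hasDerivAt_div_mul_rpow_neg (a : ℝ) {s u : ℝ} (hs : s ≠ 0) (hu : 0 < u) :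
    HasDerivAt (fun x => a / s * x ^ (-s)) (-(a * u ^ (-(s + 1)))) u := by
  refine ((Real.hasDerivAt_rpow_const (p := -s) (Or.inl hu.ne')).const_mul (a / s)).congr_deriv ?_
  rw [show -s - 1 = -(s + 1) by ring]
  field_simp

theorem abs_le_of_abs_deriv_le_of_abs_le_rpow {f d : ℝ → ℝ} {T₀ A B K p q r : ℝ}
    (hT₀ : 0 < T₀) (hA : 0 ≤ A) (hpq : 0 < p + q) (hr : 0 < r)
    (hf : ∀ u ≥ T₀, HasDerivAt f (d u) u)
    (hd : ∀ u ≥ T₀, |d u| ≤ A * u ^ (-(q + 1)) * |f u| + B * u ^ (-(r + 1)))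
    (hfK : ∀ u ≥ T₀, |f u| ≤ K * u ^ (-p)) (hlim : Tendsto f atTop (𝓝 0))
    {t : ℝ} (ht : T₀ ≤ t) :
    |f t| ≤ A * K / (p + q) * t ^ (-(p + q)) + B / r * t ^ (-r) := by
  refine abs_le_of_abs_deriv_le_neg_deriv (G := fun x => A * K / (p + q) * x ^ (-(p + q)) +
      B / r * x ^ (-r)) hf (fun u hu => (hasDerivAt_div_mul_rpow_neg (A * K) hpq.ne'
        (hT₀.trans_le hu)).add (hasDerivAt_div_mul_rpow_neg B hr.ne' (hT₀.trans_le hu)))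
    (fun u hu => ?_) hlim ?_ ht
  · have hu : 0 < u := hT₀.trans_le hu
    have hpow : u ^ (-(q + 1)) * u ^ (-p) = u ^ (-(p + q + 1)) := by
      rw [← Real.rpow_add hu]; ring_nf
    calc |d u| ≤ A * u ^ (-(q + 1)) * |f u| + B * u ^ (-(r + 1)) := hd u ‹_›
      _ ≤ A * u ^ (-(q + 1)) * (K * u ^ (-p)) + B * u ^ (-(r + 1)) := by
        gcongr; exact hfK u ‹_›
      _ = _ := by rw [← hpow]; ring
  · simpa using ((tendsto_rpow_neg_atTop hpq).const_mul (A * K / (p + q))).add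
      ((tendsto_rpow_neg_atTop hr).const_mul (B / r))

theorem exists_abs_le_of_continuousOn_Ici_of_tendsto_zero {f : ℝ → ℝ} {a : ℝ}
    (hf : ContinuousOn f (Ici a)) (hlim : Tendsto f atTop (𝓝 0)) :
    ∃ M, ∀ t ≥ a, |f t| ≤ M := by
  obtain ⟨N, hN⟩ := eventually_atTop.mp
    (hlim.abs.eventually (Iic_mem_nhds (show |(0:ℝ)| < 1 by norm_num)))
  obtain ⟨K, hK⟩ := (isCompact_Icc (a := a) (b := max a N)).exists_bound_of_continuousOn
    (hf.mono Icc_subset_Ici_self)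
  refine ⟨max K 1, fun t ht => ?_⟩
  rcases le_total t (max a N) with h | h
  · exact (hK t ⟨ht, h⟩).trans (le_max_left _ _)
  · simpa using (hN t ((le_max_right _ _).trans h)).trans (le_max_right K 1)

theorem mul_rpow_neg_add_mul_rpow_neg_le {a b r s t : ℝ} (ht : 1 ≤ t) (ha : 0 ≤ a)
    (hrs : r ≤ s) : a * t ^ (-s) + b * t ^ (-r) ≤ (a + b) * t ^ (-r) := by
  have : t ^ (-s) ≤ t ^ (-r) := Real.rpow_le_rpow_of_exponent_le ht (neg_le_neg hrs)
  nlinarith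

theorem mul_div_sq_add_one_div_cube_le {a b c C u x : ℝ} (hu : 0 < u) (hc : 0 < c) (hC : 0 ≤ C)
    (hx : 0 ≤ x) (ha : c * u ^ ((2:ℝ) / 3) ≤ a) (hb : b ≤ C * u ^ (-(1:ℝ) / 3)) :
    C * (b / a ^ 2 * x + 1 / a ^ 3) ≤
      C ^ 2 / c ^ 2 * u ^ (-((2:ℝ) / 3 + 1)) * x + C / c ^ 3 * u ^ (-((1:ℝ) + 1)) := by
  have hv : 0 < c * u ^ ((2:ℝ) / 3) := by positivity
  have hsq : b / a ^ 2 ≤ C / c ^ 2 * u ^ (-((2:ℝ) / 3 + 1)) :=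
    calc b / a ^ 2 ≤ C * u ^ (-(1:ℝ) / 3) / (c * u ^ ((2:ℝ) / 3)) ^ 2 :=
          div_le_div₀ (by positivity) hb (by positivity) (pow_le_pow_left₀ hv.le ha 2)
      _ = C / c ^ 2 * u ^ (-((2:ℝ) / 3 + 1)) := by
          have hsplit : u ^ (-(1:ℝ) / 3) = u ^ (-((2:ℝ) / 3 + 1)) * u ^ ((2:ℝ) / 3 * 2) := by
            rw [← Real.rpow_add hu]; norm_num
          rw [mul_pow, ← Real.rpow_natCast (u ^ _), ← Real.rpow_mul hu.le, hsplit]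
          field_simp
          norm_num
  have hcube : 1 / a ^ 3 ≤ 1 / c ^ 3 * u ^ (-((1:ℝ) + 1)) :=
    calc 1 / a ^ 3 ≤ 1 / (c * u ^ ((2:ℝ) / 3)) ^ 3 :=
          one_div_le_one_div_of_le (by positivity) (pow_le_pow_left₀ hv.le ha 3)
      _ = 1 / c ^ 3 * u ^ (-((1:ℝ) + 1)) := by
          rw [mul_pow, ← Real.rpow_natCast (u ^ _), ← Real.rpow_mul hu.le, Real.rpow_neg hu.le]
          norm_num
          ring
  calc C * (b / a ^ 2 * x + 1 / a ^ 3)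
      ≤ C * (C / c ^ 2 * u ^ (-((2:ℝ) / 3 + 1)) * x + 1 / c ^ 3 * u ^ (-((1:ℝ) + 1))) := by
        gcongr
    _ = _ := by ring

/-- Bootstrap/Grönwall estimate for the difference of the scaling parameters in the
parabolic regime: `|λ₁(t) − λ₂(t)| ≤ C'/t`. -/
theorem stmt17 (T₀ c C : ℝ) (hT₀ : 1 ≤ T₀) (hc : 0 < c) (hC : 0 < C)
    (l₁ l₂ : ℝ → ℝ) (d₁ d₂ : ℝ → ℝ) (α β : ℝ → E3)
    (hl₁ : ∀ t ≥ T₀, HasDerivAt l₁ (d₁ t) t)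
    (hl₂ : ∀ t ≥ T₀, HasDerivAt l₂ (d₂ t) t)
    (hdiff : ∀ t ≥ T₀, |d₁ t - d₂ t|
      ≤ C * (‖β t‖ / ‖α t‖ ^ 2 * |l₁ t - l₂ t| + 1 / ‖α t‖ ^ 3))
    (hα : ∀ t ≥ T₀, ‖α t‖ ≥ c * t ^ ((2:ℝ)/3))
    (hβ : ∀ t ≥ T₀, ‖β t‖ ≤ C * t ^ (-(1:ℝ)/3))
    (hlim : Tendsto (fun t => l₁ t - l₂ t) atTop (nhds 0)) :
    ∃ C' > (0:ℝ), ∀ t ≥ T₀, |l₁ t - l₂ t| ≤ C' / t := by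
  have hT₀pos : 0 < T₀ := by linarith
  set A := C ^ 2 / c ^ 2
  set B := C / c ^ 3
  have hf : ∀ t ≥ T₀, HasDerivAt (fun t => l₁ t - l₂ t) (d₁ t - d₂ t) t :=
    fun t ht => (hl₁ t ht).sub (hl₂ t ht)
  have hd : ∀ u ≥ T₀, |d₁ u - d₂ u| ≤
      A * u ^ (-((2:ℝ) / 3 + 1)) * |l₁ u - l₂ u| + B * u ^ (-((1:ℝ) + 1)) := fun u hu =>
    (hdiff u hu).trans (mul_div_sq_add_one_div_cube_le (hT₀pos.trans_le hu) hc hC.le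
      (abs_nonneg _) (hα u hu) (hβ u hu))
  obtain ⟨M, hM⟩ := exists_abs_le_of_continuousOn_Ici_of_tendsto_zero
    (fun t ht => (hf t ht).continuousAt.continuousWithinAt) hlim
  have hM0 : 0 ≤ M := (abs_nonneg _).trans (hM T₀ le_rfl)
  set K := B + A * M / (2 / 3)
  have hcrude : ∀ t ≥ T₀, |l₁ t - l₂ t| ≤ K * t ^ (-((2:ℝ) / 3)) := fun t ht => by
    have h := abs_le_of_abs_deriv_le_of_abs_le_rpow (p := 0) (K := M) hT₀pos (by positivity)
      (by norm_num) one_pos hf hd (by simpa using hM) hlim ht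
    rw [zero_add, div_one, add_comm] at h
    exact h.trans (mul_rpow_neg_add_mul_rpow_neg_le (hT₀.trans ht) (by positivity) (by norm_num))
  refine ⟨A * K / (2 / 3 + 2 / 3) + B, by positivity, fun t ht => ?_⟩
  have h := abs_le_of_abs_deriv_le_of_abs_le_rpow hT₀pos (by positivity) (by norm_num) one_pos
    hf hd hcrude hlim ht
  rw [div_one] at h
  rw [div_eq_mul_inv, ← Real.rpow_neg_one]
  exact h.trans (mul_rpow_neg_add_mul_rpow_neg_le (hT₀.trans ht) (by positivity) (by norm_num))
end
end
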